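/- Let p, q > 0 be real numbers with p² + q² = 1. Then the function φ_{p,q}(x,y) = 4·arctan( (p·cosh(q y)) / (q·cosh(p x)) ) − π satisfies −Δφ_{p,q} = sin φ_{p,q} at every point of ℝ², and |φ_{p,q}(x,y)| < π for all (x,y) ∈ ℝ². -/

import Mathlib

/-!
Write `φ = 4 arctan F - π` with `F = p cosh (q y) / (q cosh (p x))`. Then
`sin φ = -sin (4 arctan F) = -4F(1 - F²)/(1 + F²)²`, while
`Δ arctan F = ((1 + F²) ΔF - 2F |∇F|²)/(1 + F²)²`. Since `F` separates as
`cosh (q y) / cosh (p x)`, its derivatives are explicit, and with `cosh² = sinh² + 1` the numerator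
reduces to `(p² + q²) F (1 - F²) = F (1 - F²)`. The bound holds because `0 < arctan F < π/2`.
-/

/-- Partial derivative in the first variable of a function of two real variables. -/
noncomputable def pdx (u : ℝ → ℝ → ℝ) (x y : ℝ) : ℝ := deriv (fun s => u s y) x

/-- Partial derivative in the second variable of a function of two real variables. -/
noncomputable def pdy (u : ℝ → ℝ → ℝ) (x y : ℝ) : ℝ := deriv (fun t => u x t) y

/-- The Laplacian of a function of two real variables. -/
noncomputable def lap (u : ℝ → ℝ → ℝ) (x y : ℝ) : ℝ := pdx (pdx u) x y + pdy (pdy u) x y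

/-- The four-end solutions of the elliptic sine-Gordon equation. -/
noncomputable def phiFourEnd (p q : ℝ) (x y : ℝ) : ℝ :=
  4 * Real.arctan ((p * Real.cosh (q * y)) / (q * Real.cosh (p * x))) - Real.pi

open Real

namespace Real

theorem sin_four_arctan (t : ℝ) :
    sin (4 * arctan t) = 4 * t * (1 - t ^ 2) / (1 + t ^ 2) ^ 2 := by
  have h : 0 < 1 + t ^ 2 := by positivity
  rw [show 4 * arctan t = 2 * (2 * arctan t) by ring, sin_two_mul, sin_two_mul, cos_two_mul,
    cos_sq_arctan, mul_assoc, sin_arctan, cos_arctan]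
  field_simp
  rw [sq_sqrt h.le]
  ring

theorem abs_four_arctan_sub_pi_lt {t : ℝ} (ht : 0 < t) : |4 * arctan t - π| < π := by
  have h₀ : 0 < arctan t := arctan_zero ▸ arctan_strictMono ht
  have h₁ := arctan_lt_pi_div_two t
  rw [abs_lt]
  constructor <;> linarith

end Real

theorem deriv_deriv_arctan_comp {f f' : ℝ → ℝ} {f'' x : ℝ} (hf : ∀ s, HasDerivAt f (f' s) s)
    (hf' : HasDerivAt f' f'' x) :
    deriv (deriv fun s => arctan (f s)) x =
      (f'' * (1 + f x ^ 2) - 2 * f x * f' x ^ 2) / (1 + f x ^ 2) ^ 2 := by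
  have hderiv : deriv (fun s => arctan (f s)) = fun s => f' s / (1 + f s ^ 2) :=
    funext fun s => by rw [(hf s).arctan.deriv, one_div_mul_eq_div]
  have hquot : HasDerivAt (fun s => f' s / (1 + f s ^ 2)) _ x :=
    hf'.div (((hf x).fun_pow 2).const_add 1) (by positivity)
  rw [hderiv, hquot.deriv]
  norm_num
  ring

theorem hasDerivAt_div_cosh_mul (k a s : ℝ) :
    HasDerivAt (fun s => k / cosh (a * s)) (-k * a * sinh (a * s) / cosh (a * s) ^ 2) s :=
  ((hasDerivAt_const s k).div (hasDerivAt_const_mul a).cosh (cosh_pos _).ne').congr_deriv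
    (by ring)

theorem hasDerivAt_sinh_mul_div_cosh_mul_sq (k a s : ℝ) :
    HasDerivAt (fun s => -k * a * sinh (a * s) / cosh (a * s) ^ 2)
      (k * a ^ 2 * (sinh (a * s) ^ 2 - 1) / cosh (a * s) ^ 3) s := by
  refine (((hasDerivAt_const_mul a).sinh.const_mul (-k * a)).div
    ((hasDerivAt_const_mul a).cosh.fun_pow 2) (by positivity)).congr_deriv ?_
  field_simp
  norm_num
  linear_combination -(k * a ^ 2 * cosh (a * s)) * cosh_sq (a * s)

theorem pdx_const_mul (c : ℝ) (u : ℝ → ℝ → ℝ) :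
    pdx (fun x y => c * u x y) = fun x y => c * pdx u x y := by
  ext x y
  exact deriv_const_mul_field c

theorem pdy_const_mul (c : ℝ) (u : ℝ → ℝ → ℝ) :
    pdy (fun x y => c * u x y) = fun x y => c * pdy u x y := by
  ext x y
  exact deriv_const_mul_field c

theorem pdx_sub_const (u : ℝ → ℝ → ℝ) (d : ℝ) : pdx (fun x y => u x y - d) = pdx u := by
  ext x y
  exact deriv_sub_const d

theorem pdy_sub_const (u : ℝ → ℝ → ℝ) (d : ℝ) : pdy (fun x y => u x y - d) = pdy u := by
  ext x y
  exact deriv_sub_const d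

theorem lap_const_mul_sub_const (c d : ℝ) (u : ℝ → ℝ → ℝ) (x y : ℝ) :
    lap (fun x y => c * u x y - d) x y = c * lap u x y := by
  simp only [lap, pdx_sub_const, pdy_sub_const, pdx_const_mul, pdy_const_mul, mul_add]

noncomputable def fourEndRatio (p q x y : ℝ) : ℝ := p * cosh (q * y) / (q * cosh (p * x))

theorem lap_arctan_fourEndRatio {p q : ℝ} (hq : q ≠ 0) (hpq : p ^ 2 + q ^ 2 = 1) (x y : ℝ) :
    lap (fun x y => arctan (fourEndRatio p q x y)) x y =
      fourEndRatio p q x y * (1 - fourEndRatio p q x y ^ 2) /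
        (1 + fourEndRatio p q x y ^ 2) ^ 2 := by
  have hF : (fun s => arctan (p * cosh (q * y) / (q * cosh (p * s)))) =
      fun s => arctan (p * cosh (q * y) / q / cosh (p * s)) :=
    funext fun s => by rw [div_div]
  simp only [lap, pdx, pdy, fourEndRatio]
  rw [hF, deriv_deriv_arctan_comp (fun s => hasDerivAt_div_cosh_mul _ p s)
      (hasDerivAt_sinh_mul_div_cosh_mul_sq _ p x),
    deriv_deriv_arctan_comp
      (fun t => ((hasDerivAt_const_mul q).cosh.const_mul p).div_const (q * cosh (p * x)))
      (((hasDerivAt_const_mul q).sinh.mul_const q).const_mul p |>.div_const (q * cosh (p * x)))]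
  field_simp
  linear_combination
    -p ^ 3 * (q ^ 2 * cosh (p * x) ^ 2 - p ^ 2 * cosh (q * y) ^ 2) * cosh_sq (p * x) +
    2 * p ^ 3 * q ^ 2 * cosh (p * x) ^ 2 * cosh_sq (q * y) +
    p * cosh (p * x) ^ 2 * (q ^ 2 * cosh (p * x) ^ 2 - p ^ 2 * cosh (q * y) ^ 2) * hpq

theorem fourEnd_solves_sineGordon (p q : ℝ) (hp : 0 < p) (hq : 0 < q)
    (hpq : p ^ 2 + q ^ 2 = 1) :
    ∀ x y : ℝ,
      (-(lap (phiFourEnd p q) x y) = Real.sin (phiFourEnd p q x y)) ∧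
      |phiFourEnd p q x y| < Real.pi := by
  intro x y
  have hφ : phiFourEnd p q = fun x y => 4 * arctan (fourEndRatio p q x y) - π := rfl
  refine ⟨?_, hφ ▸ abs_four_arctan_sub_pi_lt (by unfold fourEndRatio; positivity)⟩
  rw [hφ, lap_const_mul_sub_const, lap_arctan_fourEndRatio hq.ne' hpq, sin_sub_pi,
    sin_four_arctan]
  ring
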